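/- arXiv:1411.5050 — 8 statements merged into one kernel-verified Lean document; each statement's English description precedes it below -/
import Mathlib

section
/- Let Q be an n×n real nonnegative positive semidefinite matrix of rank s, let r ≥ s be a positive integer, let B be an n×s matrix whose columns form a basis of the column space of Q, and let Q_V be the unique s×n matrix with B·Q_V = Q. Then Q admits a factorization Q = U·Uᵀ with U an n×r' entrywise nonnegative matrix for some r' ≤ r if and only if there exist r' ≤ r and an r'×s real matrix H such that (i) the matrix H·Q_V is entrywise nonnegative, and (ii) (H·Q_V)ᵀ·(H·Q_V) = Q. -/
/-!
A completely positive factor `U` of `Q = U * Uᵀ` has the same column space as `Q`, because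
`U * Uᵀ` and `U` have the same rank over an ordered field. Since `Q` is symmetric and
`Q = B * Q_V`, that column space lies in the column space of `Q_Vᵀ`, so `Uᵀ = H * Q_V` for some `H`.
-/

open Matrix

namespace Matrix

variable {m n k R : Type*} [Fintype n]

theorem range_mulVecLin_mul_le [CommSemiring R] [Fintype k] (A : Matrix m n R)
    (X : Matrix n k R) : LinearMap.range (A * X).mulVecLin ≤ LinearMap.range A.mulVecLin := by
  rw [mulVecLin_mul]
  exact LinearMap.range_comp_le_range _ _

theorem exists_mul_eq_of_range_mulVecLin_le [CommSemiring R] [Fintype k] [DecidableEq k]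
    {A : Matrix m n R} {M : Matrix m k R}
    (h : LinearMap.range M.mulVecLin ≤ LinearMap.range A.mulVecLin) :
    ∃ X : Matrix n k R, A * X = M := by
  have hcol (j : k) : ∃ x, A *ᵥ x = M.col j := h ⟨Pi.single j 1, mulVec_single_one M j⟩
  choose x hx using hcol
  exact ⟨(of x)ᵀ, ext fun i j => congrFun (hx j) i⟩

theorem range_mulVecLin_self_mul_transpose [Field R] [LinearOrder R] [IsStrictOrderedRing R]
    [Fintype m] (U : Matrix m n R) :
    LinearMap.range (U * Uᵀ).mulVecLin = LinearMap.range U.mulVecLin :=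
  Submodule.eq_of_le_of_finrank_eq (range_mulVecLin_mul_le U Uᵀ) (rank_self_mul_transpose U)

theorem exists_mul_eq_transpose_of_self_mul_transpose_eq_mul [Field R] [LinearOrder R]
    [IsStrictOrderedRing R] [Fintype m] [DecidableEq n] {l : Type*} [Fintype l]
    {U : Matrix m n R} {B : Matrix m l R} {V : Matrix l m R} (hUB : U * Uᵀ = B * V) :
    ∃ H : Matrix n l R, H * V = Uᵀ := by
  have hsymm : (U * Uᵀ)ᵀ = U * Uᵀ := by rw [transpose_mul, transpose_transpose]
  have hrange : LinearMap.range U.mulVecLin ≤ LinearMap.range Vᵀ.mulVecLin := by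
    rw [← range_mulVecLin_self_mul_transpose, ← hsymm, hUB, transpose_mul]
    exact range_mulVecLin_mul_le Vᵀ Bᵀ
  obtain ⟨X, hX⟩ := exists_mul_eq_of_range_mulVecLin_le hrange
  exact ⟨Xᵀ, by rw [← hX, transpose_mul, transpose_transpose]⟩

end Matrix

theorem cp_factorization_iff_general (n s r : ℕ)
    (Q : Matrix (Fin n) (Fin n) ℝ)
    (B : Matrix (Fin n) (Fin s) ℝ)
    (QV : Matrix (Fin s) (Fin n) ℝ) (hQV : B * QV = Q) :
    (∃ r' : ℕ, r' ≤ r ∧ ∃ U : Matrix (Fin n) (Fin r') ℝ,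
        (∀ i j, 0 ≤ U i j) ∧ U * Uᵀ = Q) ↔
    (∃ r' : ℕ, r' ≤ r ∧ ∃ H : Matrix (Fin r') (Fin s) ℝ,
        (∀ i j, 0 ≤ (H * QV) i j) ∧ (H * QV)ᵀ * (H * QV) = Q) := by
  constructor
  · rintro ⟨r', hr', U, hU, rfl⟩
    obtain ⟨H, hH⟩ := exists_mul_eq_transpose_of_self_mul_transpose_eq_mul hQV.symm
    exact ⟨r', hr', H, fun i j => hH ▸ hU j i, by rw [hH, transpose_transpose]⟩
  · rintro ⟨r', hr', H, hnn, hfact⟩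
    exact ⟨r', hr', (H * QV)ᵀ, fun i j => hnn j i, by rw [transpose_transpose, hfact]⟩

/-- A nonnegative PSD matrix `Q` of rank `s` admits a completely positive factorization
`Q = U * Uᵀ` of inner dimension `r' ≤ r` iff there is an `r' × s` matrix `H` such that
`H * Q_V` is entrywise nonnegative and `(H * Q_V)ᵀ * (H * Q_V) = Q`, where `B * Q_V = Q`
with the columns of `B` a basis of the column space of `Q`. -/
theorem cp_factorization_iff (n s r : ℕ) (hr : s ≤ r) (hrpos : 1 ≤ r)
    (Q : Matrix (Fin n) (Fin n) ℝ)
    (hQnn : ∀ i j, 0 ≤ Q i j) (hQpsd : Q.PosSemidef) (hrank : Q.rank = s)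
    (B : Matrix (Fin n) (Fin s) ℝ)
    (hBind : LinearIndependent ℝ (fun j : Fin s => Bᵀ j))
    (hBspan : Submodule.span ℝ (Set.range (fun j : Fin s => Bᵀ j)) =
      Submodule.span ℝ (Set.range (fun j : Fin n => Qᵀ j)))
    (QV : Matrix (Fin s) (Fin n) ℝ) (hQV : B * QV = Q) :
    (∃ r' : ℕ, r' ≤ r ∧ ∃ U : Matrix (Fin n) (Fin r') ℝ,
        (∀ i j, 0 ≤ U i j) ∧ U * Uᵀ = Q) ↔
    (∃ r' : ℕ, r' ≤ r ∧ ∃ H : Matrix (Fin r') (Fin s) ℝ,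
        (∀ i j, 0 ≤ (H * QV) i j) ∧ (H * QV)ᵀ * (H * QV) = Q) :=
  cp_factorization_iff_general n s r Q B QV hQV
end

section
/- Let 0 < ε < 1/5 and let ξ ∈ ℝ^r be a nonzero entrywise nonnegative vector. Let q_k ∈ ℝ^r, k ∈ N, be a finite family of entrywise nonnegative vectors each satisfying q_kᵀξ ≥ (1−ε)·‖q_k‖₂·‖ξ‖₂. Then for any two subsets S, S' ⊆ N whose sums q_S := Σ_{k∈S} q_k and q_{S'} := Σ_{k∈S'} q_k are nonzero, one has q_Sᵀ q_{S'} ≥ (1−5ε)·‖q_S‖₂·‖q_{S'}‖₂. -/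
/-!
A sum of vectors each within angle `arccos c` of `ξ` stays within that angle,
since `⟪·, ξ⟫` is additive and the norm is subadditive. By the triangle inequality for angles,
two such vectors are within angle `2 arccos c` of each other, and `cos (2 arccos c) = 2c² - 1`.
With `c = 1 - ε` this gives `1 - 4ε + 2ε² ≥ 1 - 5ε`.
-/

open RealInnerProductSpace InnerProductGeometry

section

variable {E : Type*} [NormedAddCommGroup E] [InnerProductSpace ℝ E]

theorem mul_norm_sum_mul_norm_le_inner_sum {ι : Type*} {c : ℝ} (hc : 0 ≤ c) (ξ : E)
    (s : Finset ι) (u : ι → E) (h : ∀ k ∈ s, c * ‖u k‖ * ‖ξ‖ ≤ ⟪u k, ξ⟫) :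
    c * ‖∑ k ∈ s, u k‖ * ‖ξ‖ ≤ ⟪∑ k ∈ s, u k, ξ⟫ :=
  calc c * ‖∑ k ∈ s, u k‖ * ‖ξ‖
      ≤ c * (∑ k ∈ s, ‖u k‖) * ‖ξ‖ := by gcongr; exact norm_sum_le s u
    _ = ∑ k ∈ s, c * ‖u k‖ * ‖ξ‖ := by rw [Finset.mul_sum, Finset.sum_mul]
    _ ≤ ∑ k ∈ s, ⟪u k, ξ⟫ := Finset.sum_le_sum h
    _ = ⟪∑ k ∈ s, u k, ξ⟫ := (sum_inner s u ξ).symm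

theorem angle_le_arccos_of_mul_norm_mul_norm_le_inner {u ξ : E} {c : ℝ} (hu : u ≠ 0)
    (hξ : ξ ≠ 0) (h : c * ‖u‖ * ‖ξ‖ ≤ ⟪u, ξ⟫) : angle u ξ ≤ Real.arccos c := by
  refine Real.arccos_le_arccos ((le_div_iff₀ ?_).2 ?_)
  · exact mul_pos (norm_pos_iff.2 hu) (norm_pos_iff.2 hξ)
  · rwa [← mul_assoc]

theorem two_mul_sq_sub_one_mul_norm_mul_norm_le_inner {u v ξ : E} {c : ℝ} (hc0 : 0 ≤ c)
    (hc1 : c ≤ 1) (hξ : ξ ≠ 0) (hu : c * ‖u‖ * ‖ξ‖ ≤ ⟪u, ξ⟫) (hv : c * ‖v‖ * ‖ξ‖ ≤ ⟪v, ξ⟫) :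
    (2 * c ^ 2 - 1) * ‖u‖ * ‖v‖ ≤ ⟪u, v⟫ := by
  rcases eq_or_ne u 0 with rfl | hu0
  · simp
  rcases eq_or_ne v 0 with rfl | hv0
  · simp
  have hangle : angle u v ≤ 2 * Real.arccos c :=
    calc angle u v ≤ angle u ξ + angle ξ v := angle_le_angle_add_angle u ξ v
      _ ≤ 2 * Real.arccos c := by
        rw [angle_comm ξ v, two_mul]
        gcongr <;> exact angle_le_arccos_of_mul_norm_mul_norm_le_inner ‹_› hξ ‹_›
  have hcos : 2 * c ^ 2 - 1 ≤ Real.cos (angle u v) := by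
    have hpi : 2 * Real.arccos c ≤ Real.pi := by linarith [Real.arccos_le_pi_div_two.2 hc0]
    rw [← Real.cos_arccos (by linarith) hc1, ← Real.cos_two_mul]
    exact Real.cos_le_cos_of_nonneg_of_le_pi (angle_nonneg u v) hpi hangle
  rw [← cos_angle_mul_norm_mul_norm, ← mul_assoc]
  gcongr

end

theorem subset_sums_small_mutual_angle_general {ι : Type*} (r : ℕ) (ε : ℝ)
    (hε0 : 0 < ε) (hε1 : ε < 1/5)
    (ξ : EuclideanSpace ℝ (Fin r)) (hξ0 : ξ ≠ 0)
    (N : Finset ι) (q : ι → EuclideanSpace ℝ (Fin r))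
    (hang : ∀ k ∈ N, ⟪q k, ξ⟫ ≥ (1 - ε) * ‖q k‖ * ‖ξ‖) :
    ∀ S S' : Finset ι, S ⊆ N → S' ⊆ N →
      (∑ k ∈ S, q k) ≠ 0 → (∑ k ∈ S', q k) ≠ 0 →
      ⟪∑ k ∈ S, q k, ∑ k ∈ S', q k⟫ ≥
        (1 - 5*ε) * ‖∑ k ∈ S, q k‖ * ‖∑ k ∈ S', q k‖ := by
  intro S S' hS hS' _ _
  have hc0 : 0 ≤ 1 - ε := by linarith
  have hsum : ∀ T ⊆ N, (1 - ε) * ‖∑ k ∈ T, q k‖ * ‖ξ‖ ≤ ⟪∑ k ∈ T, q k, ξ⟫ := fun T hT ↦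
    mul_norm_sum_mul_norm_le_inner_sum hc0 ξ T q fun k hk ↦ hang k (hT hk)
  have hmutual := two_mul_sq_sub_one_mul_norm_mul_norm_le_inner hc0 (by linarith) hξ0
    (hsum S hS) (hsum S' hS')
  have hcoef : 1 - 5 * ε ≤ 2 * (1 - ε) ^ 2 - 1 := by nlinarith
  calc (1 - 5 * ε) * ‖∑ k ∈ S, q k‖ * ‖∑ k ∈ S', q k‖
      ≤ (2 * (1 - ε) ^ 2 - 1) * ‖∑ k ∈ S, q k‖ * ‖∑ k ∈ S', q k‖ := by gcongr
    _ ≤ _ := hmutual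

/-- If each nonnegative vector `q k`, `k ∈ N`, makes a small angle with a fixed nonzero
nonnegative vector `ξ`, then for any two subsets `S, S' ⊆ N` whose sums are nonzero, the
sums `q_S` and `q_{S'}` satisfy `q_Sᵀ q_{S'} ≥ (1 - 5ε)‖q_S‖‖q_{S'}‖`. -/
theorem subset_sums_small_mutual_angle {ι : Type*} (r : ℕ) (ε : ℝ)
    (hε0 : 0 < ε) (hε1 : ε < 1/5)
    (ξ : EuclideanSpace ℝ (Fin r)) (hξ0 : ξ ≠ 0) (hξ : ∀ i, 0 ≤ ξ i)
    (N : Finset ι) (q : ι → EuclideanSpace ℝ (Fin r))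
    (hq : ∀ k ∈ N, ∀ i, 0 ≤ q k i)
    (hang : ∀ k ∈ N, ⟪q k, ξ⟫ ≥ (1 - ε) * ‖q k‖ * ‖ξ‖) :
    ∀ S S' : Finset ι, S ⊆ N → S' ⊆ N →
      (∑ k ∈ S, q k) ≠ 0 → (∑ k ∈ S', q k) ≠ 0 →
      ⟪∑ k ∈ S, q k, ∑ k ∈ S', q k⟫ ≥
        (1 - 5*ε) * ‖∑ k ∈ S, q k‖ * ‖∑ k ∈ S', q k‖ :=
  subset_sums_small_mutual_angle_general r ε hε0 hε1 ξ hξ0 N q hang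
end

section
/- Let 0 < ε < 1/5 and let a, b ∈ ℝ^r be nonzero vectors satisfying aᵀb ≥ (1−5ε)·‖a‖₂·‖b‖₂. Suppose that the projection of b on a equals λ·a for some real λ ≥ 1 (equivalently, Pj_a(b) = λ·a, so ‖Pj_a(b)‖₂ = λ·‖a‖₂). Then for every nonzero vector η ∈ ℝ^r, ‖Pj_η(b)‖₂ ≥ λ·( ‖Pj_η(a)‖₂ − (√(5ε(2−5ε))/(1−5ε))·‖a‖₂ ). -/
set_option maxHeartbeats 800000


open RealInnerProductSpace

/-- Fact 3 of the paper: if nonzero vectors `a, b` satisfy `aᵀb ≥ (1-5ε)‖a‖‖b‖` and the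
projection of `b` on `a` equals `λ • a` with `λ ≥ 1`, then for every nonzero `η`,
`‖Pj_η(b)‖ ≥ λ (‖Pj_η(a)‖ - (√(5ε(2-5ε))/(1-5ε)) ‖a‖)`. -/
theorem projection_transfer (r : ℕ) (ε : ℝ) (hε0 : 0 < ε) (hε1 : ε < 1/5)
    (a b : EuclideanSpace ℝ (Fin r)) (ha0 : a ≠ 0) (hb0 : b ≠ 0)
    (hab : ⟪a, b⟫ ≥ (1 - 5*ε) * ‖a‖ * ‖b‖)
    (lam : ℝ) (hlam : 1 ≤ lam)
    (hproj : (⟪b, a⟫ / ‖a‖^2) • a = lam • a) :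
    ∀ η : EuclideanSpace ℝ (Fin r), η ≠ 0 →
      ‖(⟪b, η⟫ / ‖η‖^2) • η‖ ≥
        lam * (‖(⟪a, η⟫ / ‖η‖^2) • η‖ -
          (Real.sqrt (5*ε*(2 - 5*ε)) / (1 - 5*ε)) * ‖a‖) := by
  intro η hη
  have hεpos : (0:ℝ) < 1 - 5*ε := by linarith
  have ha : (0:ℝ) < ‖a‖ := norm_pos_iff.mpr ha0
  have hb : (0:ℝ) < ‖b‖ := norm_pos_iff.mpr hb0
  have hηn : (0:ℝ) < ‖η‖ := norm_pos_iff.mpr hη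
  -- λ is the projection coefficient
  have hlam' : ⟪b, a⟫ / ‖a‖^2 = lam := by
    have h := sub_eq_zero.mpr hproj
    rw [← sub_smul] at h
    rcases smul_eq_zero.mp h with h | h
    · linarith [sub_eq_zero.mp h]
    · exact absurd h ha0
  have hba : ⟪b, a⟫ = lam * ‖a‖^2 := by
    rw [← hlam']; field_simp
  set w : EuclideanSpace ℝ (Fin r) := b - lam • a with hw
  have hbw : b = lam • a + w := by simp [hw]
  have hwa : ⟪w, a⟫ = 0 := by
    rw [hw, inner_sub_left, real_inner_smul_left, real_inner_self_eq_norm_sq, hba]; ring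
  have haw : ⟪a, w⟫ = 0 := by rw [real_inner_comm]; exact hwa
  have hnb : ‖b‖^2 = lam^2 * ‖a‖^2 + ‖w‖^2 := by
    rw [hbw, @norm_add_sq_real, real_inner_smul_left, haw, norm_smul,
      Real.norm_eq_abs, mul_pow, sq_abs]
    ring
  -- bound on ‖b‖
  have hbbound : (1 - 5*ε) * ‖b‖ ≤ lam * ‖a‖ := by
    have h1 : (1 - 5*ε) * ‖a‖ * ‖b‖ ≤ lam * ‖a‖^2 := by
      calc (1 - 5*ε) * ‖a‖ * ‖b‖ ≤ ⟪a, b⟫ := hab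
        _ = ⟪b, a⟫ := real_inner_comm b a
        _ = lam * ‖a‖^2 := hba
    nlinarith
  set C : ℝ := Real.sqrt (5*ε*(2 - 5*ε)) / (1 - 5*ε) with hC
  have hargnn : (0:ℝ) ≤ 5*ε*(2 - 5*ε) := by nlinarith
  have hCnn : 0 ≤ C := div_nonneg (Real.sqrt_nonneg _) hεpos.le
  have hCsq : C^2 = 5*ε*(2 - 5*ε) / (1 - 5*ε)^2 := by
    rw [hC, div_pow, Real.sq_sqrt hargnn]
  -- bound on ‖w‖
  have hwle : ‖w‖ ≤ lam * ‖a‖ * C := by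
    have hlampos : 0 < lam := by linarith
    have h2 : ‖w‖^2 ≤ (lam * ‖a‖ * C)^2 := by
      have h3 : ((1 - 5*ε) * ‖b‖)^2 ≤ (lam * ‖a‖)^2 := by
        have := mul_nonneg hεpos.le hb.le
        nlinarith
      have h4 : ‖b‖^2 ≤ (lam * ‖a‖)^2 / (1 - 5*ε)^2 := by
        rw [le_div_iff₀ (by positivity)]
        nlinarith
      have : ‖w‖^2 ≤ (lam * ‖a‖)^2 / (1 - 5*ε)^2 - lam^2 * ‖a‖^2 := by
        nlinarith
      calc ‖w‖^2 ≤ (lam * ‖a‖)^2 / (1 - 5*ε)^2 - lam^2 * ‖a‖^2 := this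
        _ = (lam * ‖a‖ * C)^2 := by
            rw [show (lam * ‖a‖ * C)^2 = lam^2 * ‖a‖^2 * C^2 by ring, hCsq]
            field_simp; ring
    nlinarith [norm_nonneg w, mul_nonneg (mul_nonneg hlampos.le ha.le) hCnn]
  -- projection onto η
  have hbη : ⟪b, η⟫ = lam * ⟪a, η⟫ + ⟪w, η⟫ := by
    rw [hbw, inner_add_left, real_inner_smul_left]
  have hwη : |⟪w, η⟫| ≤ ‖w‖ * ‖η‖ := abs_real_inner_le_norm w η
  have habs : lam * |⟪a, η⟫| - ‖w‖ * ‖η‖ ≤ |⟪b, η⟫| := by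
    have h5 : |lam * ⟪a, η⟫| - |(-⟪w, η⟫)| ≤ |lam * ⟪a, η⟫ - (-⟪w, η⟫)| :=
      abs_sub_abs_le_abs_sub _ _
    rw [abs_neg, sub_neg_eq_add, ← hbη] at h5
    have h6 : |lam * ⟪a, η⟫| = lam * |⟪a, η⟫| := by
      rw [abs_mul, abs_of_nonneg (by linarith : (0:ℝ) ≤ lam)]
    linarith
  have e1 : ‖(⟪b, η⟫ / ‖η‖^2) • η‖ = |⟪b, η⟫| / ‖η‖ := by
    rw [norm_smul, Real.norm_eq_abs, abs_div, abs_pow, abs_norm]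
    field_simp
  have e2 : ‖(⟪a, η⟫ / ‖η‖^2) • η‖ = |⟪a, η⟫| / ‖η‖ := by
    rw [norm_smul, Real.norm_eq_abs, abs_div, abs_pow, abs_norm]
    field_simp
  rw [ge_iff_le, e1, e2]
  have hkey : ‖w‖ * ‖η‖ ≤ lam * ‖a‖ * C * ‖η‖ :=
    mul_le_mul_of_nonneg_right hwle hηn.le
  have key : lam * (|⟪a, η⟫| - C * ‖a‖ * ‖η‖) ≤ |⟪b, η⟫| := by nlinarith
  have e3 : |⟪a, η⟫| / ‖η‖ - C * ‖a‖ = (|⟪a, η⟫| - C * ‖a‖ * ‖η‖) / ‖η‖ := by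
    field_simp
  rw [e3, ← mul_div_assoc]
  gcongr
end

section
/- Let f : 2^[n] → ℝ be a nonnegative submodular set function and let S ⊆ [n] be a nonempty set. If {S_1, …, S_k} is a partition of S into k pairwise disjoint nonempty subsets, then there exists an index i ∈ {1, …, k} such that f(S \ S_i) ≥ (1 − 1/k)·f(S). -/
/-- If `f` is a nonnegative submodular set function, `S` is nonempty, and `{S_1, …, S_k}`
is a partition of `S` into `k` pairwise disjoint nonempty subsets, then there is an `i`
with `f(S \ S_i) ≥ (1 - 1/k) f(S)`. -/
theorem submodular_partition_drop (n k : ℕ)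
    (f : Finset (Fin n) → ℝ)
    (hnn : ∀ S, 0 ≤ f S)
    (hsub : ∀ S T, f (S ∪ T) + f (S ∩ T) ≤ f S + f T)
    (S : Finset (Fin n)) (hS : S.Nonempty)
    (P : Fin k → Finset (Fin n))
    (hPne : ∀ i, (P i).Nonempty)
    (hPdisj : ∀ i j, i ≠ j → Disjoint (P i) (P j))
    (hPcov : Finset.univ.biUnion P = S) :
    ∃ i : Fin k, f (S \ P i) ≥ (1 - 1/(k : ℝ)) * f S := by
  -- k is positive
  have hk : 0 < k := by
    rcases Nat.eq_zero_or_pos k with h0 | h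
    · exfalso
      subst h0
      have : (Finset.univ : Finset (Fin 0)).biUnion P = ∅ := by simp
      rw [hPcov] at this
      exact hS.ne_empty this
    · exact h
  -- key claim by induction over index sets
  have key : ∀ T : Finset (Fin k),
      (T.card : ℝ) * f S + f (S \ T.biUnion P) ≤ (∑ i ∈ T, f (S \ P i)) + f S := by
    intro T
    induction T using Finset.induction_on with
    | empty => simp
    | @insert a T ha ih =>
      have hdisj : P a ∩ T.biUnion P = ∅ := by
        apply Finset.eq_empty_of_forall_notMem
        intro x hx
        rw [Finset.mem_inter, Finset.mem_biUnion] at hx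
        obtain ⟨hxa, j, hj, hxj⟩ := hx
        have hne : a ≠ j := by rintro rfl; exact ha hj
        exact Finset.disjoint_left.mp (hPdisj a j hne) hxa hxj
      have hsm := hsub (S \ P a) (S \ T.biUnion P)
      have hu : (S \ P a) ∪ (S \ T.biUnion P) = S := by
        ext x
        simp only [Finset.mem_union, Finset.mem_sdiff]
        constructor
        · rintro (⟨h, _⟩ | ⟨h, _⟩) <;> exact h
        · intro hx
          by_cases hxa : x ∈ P a
          · refine Or.inr ⟨hx, fun hb => ?_⟩
            have := hdisj ▸ Finset.mem_inter.mpr ⟨hxa, hb⟩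
            simp at this
          · exact Or.inl ⟨hx, hxa⟩
      have hi : (S \ P a) ∩ (S \ T.biUnion P) = S \ (P a ∪ T.biUnion P) := by
        rw [Finset.sdiff_union_distrib]
      rw [hu, hi] at hsm
      rw [Finset.card_insert_of_notMem ha, Finset.sum_insert ha,
        Finset.biUnion_insert]
      push_cast
      linarith
  have := key Finset.univ
  rw [hPcov, Finset.card_univ, Fintype.card_fin, Finset.sdiff_self] at this
  have hsum : ((k : ℝ) - 1) * f S ≤ ∑ i : Fin k, f (S \ P i) := by
    have := hnn ∅
    nlinarith [hnn S]
  -- pick an index achieving at least the average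
  by_contra hcon
  push_neg at hcon
  have hne : (Finset.univ : Finset (Fin k)).Nonempty :=
    Finset.univ_nonempty_iff.mpr ⟨⟨0, hk⟩⟩
  have hlt : ∑ i : Fin k, f (S \ P i) < ∑ _i : Fin k, (1 - 1/(k:ℝ)) * f S :=
    Finset.sum_lt_sum_of_nonempty hne (fun i _ => hcon i)
  rw [Finset.sum_const, Finset.card_univ, Fintype.card_fin, nsmul_eq_mul] at hlt
  have hk0 : (k : ℝ) ≠ 0 := Nat.cast_ne_zero.mpr hk.ne'
  have : (k : ℝ) * ((1 - 1/(k:ℝ)) * f S) = ((k:ℝ) - 1) * f S := by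
    field_simp
  linarith [this ▸ hlt]
end

section
/- Let f : 2^[n] → ℝ be a nonnegative submodular set function, let S ⊆ [n] be nonempty, and let {S_1, …, S_k} be a partition of S into k pairwise disjoint subsets. If f(S \ S_i) < (1 − 1/k)·f(S) holds for every i ∈ {1, …, k}, then for every i ∈ {1, …, k} one has f(S \ (S_1 ∪ ⋯ ∪ S_i)) < (1 − i/k)·f(S). -/
/-!
Removing two disjoint blocks `A`, `B` from `S` leaves the sets `S \ A` and `S \ B`, whose union
is `S` and whose intersection is `S \ (A ∪ B)`. Submodularity therefore gives
`f (S \ (A ∪ B)) ≤ f (S \ A) + f (S \ B) - f S`, so the deficits `f S - f (S \ S_j) > f S / k`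
add up as the blocks `S_1, …, S_i` are removed one at a time.
-/

open Finset

namespace Finset

variable {α ι : Type*} [DecidableEq α]

def IsSubmodular (f : Finset α → ℝ) : Prop :=
  ∀ S T, f (S ∪ T) + f (S ∩ T) ≤ f S + f T

theorem IsSubmodular.sdiff_union_add_le {f : Finset α → ℝ} (hf : IsSubmodular f)
    (S : Finset α) {A B : Finset α} (hAB : Disjoint A B) :
    f (S \ (A ∪ B)) + f S ≤ f (S \ A) + f (S \ B) := by
  have hunion : (S \ A) ∪ (S \ B) = S := by
    rw [← sdiff_inter_distrib_right, disjoint_iff_inter_eq_empty.1 hAB, sdiff_empty]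
  have hinter : (S \ A) ∩ (S \ B) = S \ (A ∪ B) := (sdiff_union_distrib S A B).symm
  simpa [hunion, hinter, add_comm] using hf (S \ A) (S \ B)

theorem IsSubmodular.sdiff_biUnion_lt [DecidableEq ι] {f : Finset α → ℝ} (hf : IsSubmodular f)
    (S : Finset α) (P : ι → Finset α) (δ : ℝ) {t : Finset ι} (ht : t.Nonempty)
    (hdisj : (t : Set ι).PairwiseDisjoint P) (hlt : ∀ i ∈ t, f (S \ P i) < f S - δ) :
    f (S \ t.biUnion P) < f S - #t * δ := by
  induction ht using Nonempty.cons_induction with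
  | singleton a => simpa using hlt a (mem_singleton_self a)
  | cons a t ha ht ih =>
    rw [coe_cons, Set.pairwiseDisjoint_insert_of_notMem (by simpa using ha)] at hdisj
    have hblock : Disjoint (P a) (t.biUnion P) :=
      (disjoint_biUnion_right _ _ _).2 fun j hj => hdisj.2 j hj
    have hstep := hf.sdiff_union_add_le S hblock
    have ha_lt := hlt a (mem_cons_self a t)
    have ht_lt := ih hdisj.1 fun i hi => hlt i (mem_cons_of_mem hi)
    rw [cons_eq_insert, biUnion_insert, card_insert_of_notMem ha]
    push_cast
    linarith

end Finset

theorem submodular_partition_induction_general (n k : ℕ)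
    (f : Finset (Fin n) → ℝ)
    (hsub : ∀ S T, f (S ∪ T) + f (S ∩ T) ≤ f S + f T)
    (S : Finset (Fin n))
    (P : Fin k → Finset (Fin n))
    (hPdisj : ∀ i j, i ≠ j → Disjoint (P i) (P j))
    (hbad : ∀ i : Fin k, f (S \ P i) < (1 - 1/(k : ℝ)) * f S) :
    ∀ i : Fin k, f (S \ (Finset.Iic i).biUnion P) <
      (1 - ((i : ℕ) + 1)/(k : ℝ)) * f S := by
  intro i
  have hlt : ∀ j ∈ Iic i, f (S \ P j) < f S - f S / k := fun j _ => by
    convert hbad j using 1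
    ring
  have h := IsSubmodular.sdiff_biUnion_lt hsub S P (f S / k) nonempty_Iic
    (fun a _ b _ hab => hPdisj a b hab) hlt
  rw [Fin.card_Iic] at h
  convert h using 1
  push_cast
  ring

/-- Induction step in the proof of the partition lemma: if `f` is nonnegative submodular,
`{S_1, …, S_k}` partitions the nonempty set `S`, and `f(S \ S_i) < (1 - 1/k) f(S)` for
every `i`, then `f(S \ (S_1 ∪ ⋯ ∪ S_i)) < (1 - i/k) f(S)` for every `i`. -/
theorem submodular_partition_induction (n k : ℕ)
    (f : Finset (Fin n) → ℝ)
    (hnn : ∀ S, 0 ≤ f S)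
    (hsub : ∀ S T, f (S ∪ T) + f (S ∩ T) ≤ f S + f T)
    (S : Finset (Fin n)) (hS : S.Nonempty)
    (P : Fin k → Finset (Fin n))
    (hPdisj : ∀ i j, i ≠ j → Disjoint (P i) (P j))
    (hPcov : Finset.univ.biUnion P = S)
    (hbad : ∀ i : Fin k, f (S \ P i) < (1 - 1/(k : ℝ)) * f S) :
    ∀ i : Fin k, f (S \ (Finset.Iic i).biUnion P) <
      (1 - ((i : ℕ) + 1)/(k : ℝ)) * f S :=
  submodular_partition_induction_general n k f hsub S P hPdisj hbad
end

section
/- Let 0 < ε < 1, let r ≥ 1 be a positive integer, let w > 0, and let q_1, …, q_ℓ be nonnegative reals such that q_k ≤ (ε/(2r))·w for every k, Σ_{k=1}^{ℓ} q_k ≥ w/r, and Σ_{k=1}^{ℓ} q_k ≤ w. Then there exist an integer h with 1/ε − 1 ≤ h < 2r/ε and a partition of {1, …, ℓ} into h sets V_1, …, V_h (consecutive intervals) such that Σ_{k∈V_s} q_k ≥ (ε/(2r))·w for every s ∈ {1, …, h}. -/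
/-!
Set `δ = (ε/(2r))·w` and `h = ⌊S/(2δ)⌋`, where `S = ∑ q_k`; the bounds `w/r ≤ S ≤ w` put
`S/(2δ)` in `[1/ε, r/ε]`, which gives the bounds on `h`, and `2hδ ≤ S`. Since every item is
at most `δ`, the shortest prefix whose sum reaches `2(h-1)δ` overshoots by less than `δ`, so
the remaining suffix still carries at least `δ`; recursing on that prefix cuts `[0, l)` into
`h` consecutive batches, each of sum at least `δ`.
-/

open Finset

theorem exists_le_sum_range_lt_add {q : ℕ → ℝ} {l : ℕ} {δ t : ℝ} (hq : ∀ k < l, q k ≤ δ)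
    (ht : 0 < t) (htl : t ≤ ∑ k ∈ range l, q k) :
    ∃ m ≤ l, t ≤ ∑ k ∈ range m, q k ∧ ∑ k ∈ range m, q k < t + δ := by
  classical
  have hex : ∃ m, t ≤ ∑ k ∈ range m, q k := ⟨l, htl⟩
  refine ⟨Nat.find hex, Nat.find_min' hex htl, Nat.find_spec hex, ?_⟩
  obtain ⟨m, hm⟩ : ∃ m, Nat.find hex = m + 1 := by
    refine Nat.exists_eq_succ_of_ne_zero fun h0 => ?_
    have := Nat.find_spec hex
    rw [h0, sum_range_zero] at this
    linarith
  have hml : m < l := by have := Nat.find_min' hex htl; omega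
  have hprefix : ∑ k ∈ range m, q k < t := not_le.mp (Nat.find_min hex (by omega))
  rw [hm, sum_range_succ]
  linarith [hq m hml]

theorem lt_of_le_sum_Ico {q : ℕ → ℝ} {δ : ℝ} {a b : ℕ} (hδ : 0 < δ)
    (hab : δ ≤ ∑ k ∈ Ico a b, q k) : a < b := by
  by_contra! hba
  rw [Ico_eq_empty_of_le hba, sum_empty] at hab
  linarith

theorem exists_consecutive_batches {q : ℕ → ℝ} {δ : ℝ} (hδ : 0 < δ) {h : ℕ} (hh : 1 ≤ h)
    {l : ℕ} (hq : ∀ k < l, q k ≤ δ) (hsum : 2 * h * δ ≤ ∑ k ∈ range l, q k) :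
    ∃ c : ℕ → ℕ, c 0 = 0 ∧ c h = l ∧ ∀ s < h, δ ≤ ∑ k ∈ Ico (c s) (c (s + 1)), q k := by
  induction h, hh using Nat.le_induction generalizing l with
  | base =>
    refine ⟨fun s => if s = 0 then 0 else l, rfl, rfl, fun s hs => ?_⟩
    obtain rfl : s = 0 := by omega
    change δ ≤ ∑ k ∈ Ico 0 l, q k
    rw [Nat.Ico_zero_eq_range]
    push_cast at hsum
    linarith
  | succ h hh ih =>
    have ht : 0 < 2 * h * δ := by positivity
    obtain ⟨m, hml, hm_lb, hm_ub⟩ :=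
      exists_le_sum_range_lt_add hq ht (by push_cast at hsum; linarith)
    obtain ⟨c, hc0, hch, hc⟩ := ih (fun k hk => hq k (by omega)) hm_lb
    refine ⟨fun s => if s ≤ h then c s else l, by simp [hc0], by simp, fun s hs => ?_⟩
    rcases Nat.lt_succ_iff_lt_or_eq.mp hs with hs | rfl
    · simpa [hs.le, Nat.succ_le_of_lt hs] using hc s hs
    · simp only [le_refl, if_true, Nat.not_succ_le_self, if_false, hch]
      rw [sum_Ico_eq_sub _ hml]
      push_cast at hsum
      linarith

theorem batch_partition_general (ε : ℝ) (hε0 : 0 < ε) (hε1 : ε < 1)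
    (r : ℕ) (hr : 1 ≤ r) (w : ℝ) (hw : 0 < w)
    (l : ℕ) (q : ℕ → ℝ)
    (hqub : ∀ k < l, q k ≤ ε/(2*r) * w)
    (hlb : w/r ≤ ∑ k ∈ Finset.range l, q k)
    (hub : ∑ k ∈ Finset.range l, q k ≤ w) :
    ∃ h : ℕ, 1/ε - 1 ≤ (h : ℝ) ∧ (h : ℝ) < 2*r/ε ∧
      ∃ c : ℕ → ℕ, c 0 = 0 ∧ c h = l ∧ (∀ s < h, c s < c (s+1)) ∧
        ∀ s < h, ε/(2*r) * w ≤ ∑ k ∈ Finset.Ico (c s) (c (s+1)), q k := by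
  set δ := ε / (2 * r) * w with hδ
  set S := ∑ k ∈ range l, q k
  have hr0 : (0 : ℝ) < r := Nat.cast_pos.mpr hr
  have hδ0 : 0 < δ := by positivity
  have hratio_lb : 1 / ε ≤ S / (2 * δ) := by
    rw [le_div_iff₀ (by positivity)]
    calc 1 / ε * (2 * δ) = w / r := by rw [hδ]; field_simp
      _ ≤ S := hlb
  have hratio_ub : S / (2 * δ) ≤ r / ε := by
    rw [div_le_iff₀ (by positivity)]
    calc S ≤ w := hub
      _ = r / ε * (2 * δ) := by rw [hδ]; field_simp
  have hε_inv : 1 < 1 / ε := by rw [lt_div_iff₀ hε0]; linarith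
  have hh : 1 ≤ ⌊S / (2 * δ)⌋₊ := Nat.le_floor (by push_cast; linarith)
  have hh_le : (⌊S / (2 * δ)⌋₊ : ℝ) ≤ S / (2 * δ) := Nat.floor_le ((one_div_pos.mpr hε0).le.trans hratio_lb)
  have hsum : 2 * ⌊S / (2 * δ)⌋₊ * δ ≤ S := by
    rw [le_div_iff₀ (by positivity)] at hh_le
    linarith
  obtain ⟨c, hc0, hch, hc⟩ := exists_consecutive_batches hδ0 hh hqub hsum
  refine ⟨_, by linarith [Nat.lt_floor_add_one (S / (2 * δ))], ?_, c, hc0, hch,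
    fun s hs => lt_of_le_sum_Ico hδ0 (hc s hs), hc⟩
  have : r / ε < 2 * r / ε := by rw [mul_div_assoc]; linarith [div_pos hr0 hε0]
  linarith

/-- Combinatorial core of the packing lemma: nonnegative reals `q 0, …, q (l-1)`, each at
most `(ε/(2r))·w`, with total sum in `[w/r, w]`, can be partitioned into `h` consecutive
intervals, `1/ε - 1 ≤ h < 2r/ε`, each of total at least `(ε/(2r))·w`. -/
theorem batch_partition (ε : ℝ) (hε0 : 0 < ε) (hε1 : ε < 1)
    (r : ℕ) (hr : 1 ≤ r) (w : ℝ) (hw : 0 < w)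
    (l : ℕ) (q : ℕ → ℝ)
    (hqnn : ∀ k < l, 0 ≤ q k)
    (hqub : ∀ k < l, q k ≤ ε/(2*r) * w)
    (hlb : w/r ≤ ∑ k ∈ Finset.range l, q k)
    (hub : ∑ k ∈ Finset.range l, q k ≤ w) :
    ∃ h : ℕ, 1/ε - 1 ≤ (h : ℝ) ∧ (h : ℝ) < 2*r/ε ∧
      ∃ c : ℕ → ℕ, c 0 = 0 ∧ c h = l ∧ (∀ s < h, c s < c (s+1)) ∧
        ∀ s < h, ε/(2*r) * w ≤ ∑ k ∈ Finset.Ico (c s) (c (s+1)), q k :=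
  batch_partition_general ε hε0 hε1 r hr w hw l q hqub hlb hub
end

section
/- Let Q be an n×n symmetric matrix with nonnegative entries admitting a factorization Q = U·Uᵀ with U an entrywise nonnegative n×r matrix, let C ≥ 0, and let [n] = 𝒰 ⊔ N be a partition of the index set. Suppose x* ∈ [0,1]^N satisfies the feasibility condition 1_𝒰ᵀ·Q[𝒰,𝒰]·1_𝒰 + 2·1_𝒰ᵀ·Q[𝒰,N]·x* + (x*)ᵀ·Q[N,N]·x* ≤ C². Define t := U[N,*]ᵀ·x* ∈ ℝ^r and t' := 1_𝒰ᵀ·Q[𝒰,N]·x* ∈ ℝ. Then for every y ∈ [0,1]^N with U[N,*]ᵀ·y ≤ t componentwise and 1_𝒰ᵀ·Q[𝒰,N]·y ≤ t', the vector x̄ ∈ [0,1]^n defined by x̄_k = 1 for k ∈ 𝒰 and x̄_k = y_k for k ∈ N satisfies x̄ᵀ·Q·x̄ ≤ C². -/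
open Matrix

/-! With `Q = U Uᵀ` every block `u_sᵀ Q[s,t] v_t` is `∑_p a_p b_p` with `a = U[s,*]ᵀ u`,
`b = U[t,*]ᵀ v`, so for `x̄ = (1_𝒰, z)` one has `x̄ᵀ Q x̄ = ‖U[𝒰,*]ᵀ 1_𝒰 + U[N,*]ᵀ z‖²`.
Both summands are nonnegative vectors and `U[N,*]ᵀ y ≤ U[N,*]ᵀ x*`, so the norm only decreases
when `x*` is replaced by `y`. -/

theorem sum_sum_mul_mul_transpose_self_mul {R m r : Type*} [CommSemiring R] [Fintype r]
    (U : Matrix m r R) (s t : Finset m) (u v : m → R) :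
    ∑ i ∈ s, ∑ j ∈ t, u i * (U * Uᵀ) i j * v j
      = ∑ p, (∑ i ∈ s, U i p * u i) * ∑ j ∈ t, U j p * v j := by
  simp only [mul_apply, transpose_apply, Finset.mul_sum, Finset.sum_mul]
  conv_rhs => rw [Finset.sum_comm]; enter [2, j]; rw [Finset.sum_comm]
  rw [Finset.sum_comm]
  exact Finset.sum_congr rfl fun j _ => Finset.sum_congr rfl fun i _ =>
    Finset.sum_congr rfl fun p _ => by ring

theorem sum_mul_ite_mem_of_partition {R m : Type*} [AddCommMonoid R] [Mul R] [One R] [Fintype m]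
    [DecidableEq m] {s t : Finset m} (hdisj : Disjoint s t) (hcover : s ∪ t = Finset.univ)
    (f y : m → R) :
    ∑ k, f k * (if k ∈ s then 1 else y k) = ∑ k ∈ s, f k * 1 + ∑ k ∈ t, f k * y k := by
  rw [← hcover, Finset.sum_union hdisj]
  congr 1
  · exact Finset.sum_congr rfl fun k hk => by rw [if_pos hk]
  · exact Finset.sum_congr rfl fun k hk => by rw [if_neg (Finset.disjoint_right.mp hdisj hk)]

theorem rounded_point_feasible_general (n r : ℕ)
    (Q : Matrix (Fin n) (Fin n) ℝ)
    (U : Matrix (Fin n) (Fin r) ℝ) (hUnn : ∀ i j, 0 ≤ U i j)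
    (hfac : U * Uᵀ = Q)
    (C : ℝ)
    (𝒰 N : Finset (Fin n)) (hdisj : Disjoint 𝒰 N) (hcover : 𝒰 ∪ N = Finset.univ)
    (x : Fin n → ℝ)
    (hfeas : (∑ i ∈ 𝒰, ∑ j ∈ 𝒰, Q i j)
        + 2 * (∑ i ∈ 𝒰, ∑ j ∈ N, Q i j * x j)
        + (∑ i ∈ N, ∑ j ∈ N, x i * Q i j * x j) ≤ C^2)
    (y : Fin n → ℝ) (hy : ∀ k ∈ N, 0 ≤ y k ∧ y k ≤ 1)
    (hyt : ∀ p : Fin r, (∑ k ∈ N, U k p * y k) ≤ ∑ k ∈ N, U k p * x k)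
    (xb : Fin n → ℝ) (hxb : ∀ k, xb k = if k ∈ 𝒰 then 1 else y k) :
    ∑ i, ∑ j, xb i * Q i j * xb j ≤ C^2 := by
  subst hfac
  set a : Fin r → ℝ := fun p => ∑ k ∈ 𝒰, U k p * 1
  set b : (Fin n → ℝ) → Fin r → ℝ := fun z p => ∑ k ∈ N, U k p * z k
  have ha : ∀ p, 0 ≤ a p := fun p => Finset.sum_nonneg fun k _ => by simpa using hUnn k p
  have hby : ∀ p, 0 ≤ b y p := fun p =>
    Finset.sum_nonneg fun k hk => mul_nonneg (hUnn k p) (hy k hk).1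
  have hxb_col : ∀ p, ∑ k, U k p * xb k = a p + b y p := fun p => by
    simp only [hxb]
    exact sum_mul_ite_mem_of_partition hdisj hcover _ y
  calc ∑ i, ∑ j, xb i * (U * Uᵀ) i j * xb j
      = ∑ p, (a p + b y p) ^ 2 := by
        simp only [sum_sum_mul_mul_transpose_self_mul, hxb_col, sq]
    _ ≤ ∑ p, (a p + b x p) ^ 2 := Finset.sum_le_sum fun p _ =>
        pow_le_pow_left₀ (add_nonneg (ha p) (hby p)) (add_le_add le_rfl (hyt p)) 2
    _ = (∑ i ∈ 𝒰, ∑ j ∈ 𝒰, 1 * (U * Uᵀ) i j * 1)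
        + 2 * (∑ i ∈ 𝒰, ∑ j ∈ N, 1 * (U * Uᵀ) i j * x j)
        + (∑ i ∈ N, ∑ j ∈ N, x i * (U * Uᵀ) i j * x j) := by
        simp only [sum_sum_mul_mul_transpose_self_mul]
        rw [Finset.mul_sum, ← Finset.sum_add_distrib, ← Finset.sum_add_distrib]
        exact Finset.sum_congr rfl fun p _ => by ring
    _ ≤ C ^ 2 := by simpa only [one_mul, mul_one] using hfeas

/-- Rounding feasibility step of the PTAS for linear packing with one quadratic constraint:
with `Q = U Uᵀ` entrywise nonnegative, a partition `[n] = 𝒰 ⊔ N`, and a fractional point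
`x* ∈ [0,1]^N` feasible for `x̄ᵀ Q x̄ ≤ C²` (with the `𝒰`-coordinates set to `1`), any
`y ∈ [0,1]^N` with `U[N]ᵀ y ≤ U[N]ᵀ x*` componentwise and `1_𝒰ᵀ Q[𝒰,N] y ≤ 1_𝒰ᵀ Q[𝒰,N] x*`
yields a point `x̄` (equal to `1` on `𝒰` and to `y` on `N`) with `x̄ᵀ Q x̄ ≤ C²`. -/
theorem rounded_point_feasible (n r : ℕ)
    (Q : Matrix (Fin n) (Fin n) ℝ) (hsym : Q.IsSymm) (hQnn : ∀ i j, 0 ≤ Q i j)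
    (U : Matrix (Fin n) (Fin r) ℝ) (hUnn : ∀ i j, 0 ≤ U i j)
    (hfac : U * Uᵀ = Q)
    (C : ℝ) (hC : 0 ≤ C)
    (𝒰 N : Finset (Fin n)) (hdisj : Disjoint 𝒰 N) (hcover : 𝒰 ∪ N = Finset.univ)
    (x : Fin n → ℝ) (hx : ∀ k ∈ N, 0 ≤ x k ∧ x k ≤ 1)
    (hfeas : (∑ i ∈ 𝒰, ∑ j ∈ 𝒰, Q i j)
        + 2 * (∑ i ∈ 𝒰, ∑ j ∈ N, Q i j * x j)
        + (∑ i ∈ N, ∑ j ∈ N, x i * Q i j * x j) ≤ C^2)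
    (y : Fin n → ℝ) (hy : ∀ k ∈ N, 0 ≤ y k ∧ y k ≤ 1)
    (hyt : ∀ p : Fin r, (∑ k ∈ N, U k p * y k) ≤ ∑ k ∈ N, U k p * x k)
    (hyt' : (∑ i ∈ 𝒰, ∑ j ∈ N, Q i j * y j) ≤ ∑ i ∈ 𝒰, ∑ j ∈ N, Q i j * x j)
    (xb : Fin n → ℝ) (hxb : ∀ k, xb k = if k ∈ 𝒰 then 1 else y k) :
    ∑ i, ∑ j, xb i * Q i j * xb j ≤ C^2 :=
  rounded_point_feasible_general n r Q U hUnn hfac C 𝒰 N hdisj hcover x hfeas y hy hyt xb hxb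
end

section
/- Let 0 < ε < 1/5, let ξ ∈ ℝ^r be a nonzero entrywise nonnegative vector, and let q_1, …, q_n ∈ ℝ^r be nonzero entrywise nonnegative vectors ordered so that ‖q_1‖₂ ≥ ⋯ ≥ ‖q_n‖₂, each satisfying q_kᵀξ ≥ (1−ε)·‖q_k‖₂·‖ξ‖₂. Let u_1, …, u_n be positive reals such that u_k ≤ (1+ε)·u_{k'} for all k, k' ∈ [n]. Let C > 0 and let S* ⊆ [n] satisfy ‖Σ_{k∈S*} q_k‖₂ ≥ C and |S*| ≥ 1/ε. Assume ‖Σ_{k=1}^n q_k‖₂ ≥ C and let m be the least index with ‖Σ_{k=1}^m q_k‖₂ ≥ C. Then Σ_{k=1}^m u_k ≤ (1/(1−5ε) + ε)·(1+ε)·Σ_{k∈S*} u_k. -/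
open RealInnerProductSpace

/-!
Each `q k` makes an angle at most `arccos (1 - ε)` with `ξ`, so any two make an angle at most
twice that, i.e. `⟪q j, q k⟫ ≥ c ‖q j‖ ‖q k‖` with `c = 2(1-ε)² - 1`. Hence adding to a sum of
such vectors a further sum over an index set `B` raises its norm by at least
`c (1-ε) Σ_B ‖q k‖ ≥ (1-5ε) Σ_B ‖q k‖`.
Write the greedy prefix of length `t = m - 1` as `(prefix ∩ S*) ∪ (prefix \ S*)` and
`S* = (prefix ∩ S*) ∪ (S* \ prefix)`. Items of `S* \ prefix` are no longer than `q t`, and those of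
`prefix \ S*` no shorter, so the prefix failing to reach `C ≤ ‖Σ_{S*} q‖` forces
`(1-5ε) |prefix \ S*| < |S* \ prefix|`, whence `(1-5ε)(m-1) < |S*|`. With `1 ≤ ε |S*|` this gives
`m ≤ (1/(1-5ε) + ε) |S*|`, and costs within a factor `1+ε` of each other finish the bound.
-/

section Cone

open InnerProductGeometry Real

variable {E : Type*} [NormedAddCommGroup E] [InnerProductSpace ℝ E] {ξ : E} {β : ℝ}

lemma angle_le_arccos_of_mul_norm_mul_norm_le_inner_s15 {x : E} (hx : x ≠ 0) (hξ : ξ ≠ 0)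
    (h : β * ‖x‖ * ‖ξ‖ ≤ ⟪x, ξ⟫) : angle x ξ ≤ arccos β := by
  refine arccos_le_arccos ?_
  rw [le_div_iff₀ (by positivity)]
  linarith

lemma two_mul_sq_sub_one_mul_norm_mul_norm_le_inner_s15 (hξ : ξ ≠ 0) (hβ0 : 0 ≤ β) (hβ1 : β ≤ 1)
    {x y : E} (hx : β * ‖x‖ * ‖ξ‖ ≤ ⟪x, ξ⟫) (hy : β * ‖y‖ * ‖ξ‖ ≤ ⟪y, ξ⟫) :
    (2 * β ^ 2 - 1) * (‖x‖ * ‖y‖) ≤ ⟪x, y⟫ := by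
  rcases eq_or_ne x 0 with rfl | hx0
  · simp
  rcases eq_or_ne y 0 with rfl | hy0
  · simp
  have hangle : angle x y ≤ 2 * arccos β :=
    calc angle x y ≤ angle x ξ + angle ξ y := angle_le_angle_add_angle x ξ y
      _ ≤ 2 * arccos β := by
        rw [angle_comm ξ y]
        linarith [angle_le_arccos_of_mul_norm_mul_norm_le_inner_s15 hx0 hξ hx,
          angle_le_arccos_of_mul_norm_mul_norm_le_inner_s15 hy0 hξ hy]
  have hcos : 2 * β ^ 2 - 1 ≤ cos (angle x y) :=
    calc 2 * β ^ 2 - 1 = cos (2 * arccos β) := by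
          rw [cos_two_mul, cos_arccos (by linarith) hβ1]
      _ ≤ cos (angle x y) := cos_le_cos_of_nonneg_of_le_pi (angle_nonneg x y)
          (by linarith [arccos_le_pi_div_two.mpr hβ0]) hangle
  rw [← cos_angle_mul_norm_mul_norm]
  exact mul_le_mul_of_nonneg_right hcos (by positivity)

lemma mul_sum_norm_le_norm_sum {ι : Type*} (hξ : ξ ≠ 0) (A : Finset ι) {q : ι → E}
    (hA : ∀ k ∈ A, β * ‖q k‖ * ‖ξ‖ ≤ ⟪q k, ξ⟫) : β * ∑ k ∈ A, ‖q k‖ ≤ ‖∑ k ∈ A, q k‖ := by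
  refine le_of_mul_le_mul_right ?_ (norm_pos_iff.mpr hξ)
  calc (β * ∑ k ∈ A, ‖q k‖) * ‖ξ‖ = ∑ k ∈ A, β * ‖q k‖ * ‖ξ‖ := by
        rw [Finset.mul_sum, Finset.sum_mul]
    _ ≤ ∑ k ∈ A, ⟪q k, ξ⟫ := Finset.sum_le_sum hA
    _ = ⟪∑ k ∈ A, q k, ξ⟫ := (sum_inner A q ξ).symm
    _ ≤ ‖∑ k ∈ A, q k‖ * ‖ξ‖ := real_inner_le_norm _ _

lemma norm_add_mul_norm_le_norm_add {c : ℝ} (hc : |c| ≤ 1) {u v : E}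
    (h : c * (‖u‖ * ‖v‖) ≤ ⟪u, v⟫) : ‖u‖ + c * ‖v‖ ≤ ‖u + v‖ := by
  have hc2 : c ^ 2 ≤ 1 := by nlinarith [sq_abs c, abs_nonneg c]
  have hsq : (‖u‖ + c * ‖v‖) ^ 2 ≤ ‖u + v‖ ^ 2 := by
    rw [norm_add_sq_real]
    nlinarith [sq_nonneg ‖v‖]
  exact (abs_le_of_sq_le_sq hsq (norm_nonneg _)).trans' (le_abs_self _)

lemma norm_sum_add_mul_sum_norm_le_norm_add {ι : Type*} (hξ : ξ ≠ 0) (hβ0 : 0 ≤ β)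
    (hβ1 : β ≤ 1) (hc : 0 ≤ 2 * β ^ 2 - 1) {A B : Finset ι} {q : ι → E}
    (hA : ∀ k ∈ A, β * ‖q k‖ * ‖ξ‖ ≤ ⟪q k, ξ⟫) (hB : ∀ k ∈ B, β * ‖q k‖ * ‖ξ‖ ≤ ⟪q k, ξ⟫) :
    ‖∑ k ∈ A, q k‖ + (2 * β ^ 2 - 1) * β * ∑ k ∈ B, ‖q k‖ ≤
      ‖∑ k ∈ A, q k + ∑ k ∈ B, q k‖ := by
  set c := 2 * β ^ 2 - 1
  have hinner : c * (‖∑ k ∈ A, q k‖ * ‖∑ k ∈ B, q k‖) ≤ ⟪∑ k ∈ A, q k, ∑ k ∈ B, q k⟫ :=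
    calc c * (‖∑ k ∈ A, q k‖ * ‖∑ k ∈ B, q k‖)
        ≤ c * ((∑ a ∈ A, ‖q a‖) * ∑ b ∈ B, ‖q b‖) := by
          gcongr <;> exact norm_sum_le _ _
      _ = ∑ a ∈ A, ∑ b ∈ B, c * (‖q a‖ * ‖q b‖) := by
          rw [Finset.sum_mul_sum, Finset.mul_sum]
          simp only [Finset.mul_sum]
      _ ≤ ∑ a ∈ A, ∑ b ∈ B, ⟪q a, q b⟫ :=
          Finset.sum_le_sum fun a ha ↦ Finset.sum_le_sum fun b hb ↦
            two_mul_sq_sub_one_mul_norm_mul_norm_le_inner_s15 hξ hβ0 hβ1 (hA a ha) (hB b hb)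
      _ = ⟪∑ k ∈ A, q k, ∑ k ∈ B, q k⟫ := by
          rw [sum_inner]
          simp only [inner_sum]
  calc ‖∑ k ∈ A, q k‖ + c * β * ∑ k ∈ B, ‖q k‖
      ≤ ‖∑ k ∈ A, q k‖ + c * ‖∑ k ∈ B, q k‖ := by
        rw [mul_assoc]
        gcongr
        exact mul_sum_norm_le_norm_sum hξ B hB
    _ ≤ ‖∑ k ∈ A, q k + ∑ k ∈ B, q k‖ :=
        norm_add_mul_norm_le_norm_add (abs_le.mpr ⟨by linarith, by nlinarith⟩) hinner

lemma mul_lt_card_of_norm_sum_range_lt {q : ℕ → E} {n t : ℕ} (ht : t < n) (hξ : ξ ≠ 0)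
    (hβ0 : 0 ≤ β) (hβ1 : β ≤ 1) (hc : 0 ≤ 2 * β ^ 2 - 1)
    (hord : ∀ k k', k ≤ k' → k' < n → ‖q k'‖ ≤ ‖q k‖)
    (hcone : ∀ k < n, β * ‖q k‖ * ‖ξ‖ ≤ ⟪q k, ξ⟫)
    {S : Finset ℕ} (hS : S ⊆ Finset.range n)
    (hlt : ‖∑ k ∈ Finset.range t, q k‖ < ‖∑ k ∈ S, q k‖) :
    (2 * β ^ 2 - 1) * β * t < S.card := by
  set κ := (2 * β ^ 2 - 1) * β
  set x := ‖q t‖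
  have hκ0 : 0 ≤ κ := mul_nonneg hc hβ0
  have hκ1 : κ ≤ 1 := by nlinarith
  have hfar : ‖∑ k ∈ S \ Finset.range t, q k‖ ≤ (S \ Finset.range t).card * x := by
    refine (norm_sum_le _ _).trans ?_
    rw [← nsmul_eq_mul]
    refine Finset.sum_le_card_nsmul _ _ _ fun k hk ↦ ?_
    simp only [Finset.mem_sdiff, Finset.mem_range, not_lt] at hk
    exact hord t k hk.2 (Finset.mem_range.mp (hS hk.1))
  have hnear : (Finset.range t \ S).card * x ≤ ∑ k ∈ Finset.range t \ S, ‖q k‖ := by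
    rw [← nsmul_eq_mul]
    refine Finset.card_nsmul_le_sum _ _ _ fun k hk ↦ ?_
    simp only [Finset.mem_sdiff, Finset.mem_range] at hk
    exact hord k t hk.1.le ht
  have hprefix := norm_sum_add_mul_sum_norm_le_norm_add (A := Finset.range t ∩ S)
    (B := Finset.range t \ S) hξ hβ0 hβ1 hc
    (fun k hk ↦ hcone k (Finset.mem_range.mp (hS (Finset.mem_inter.mp hk).2)))
    (fun k hk ↦ hcone k ((Finset.mem_range.mp (Finset.mem_sdiff.mp hk).1).trans ht))
  rw [Finset.sum_inter_add_sum_sdiff] at hprefix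
  have hwhole : ‖∑ k ∈ S, q k‖ ≤
      ‖∑ k ∈ Finset.range t ∩ S, q k‖ + ‖∑ k ∈ S \ Finset.range t, q k‖ := by
    rw [← Finset.sum_inter_add_sum_sdiff S (Finset.range t), Finset.inter_comm]
    exact norm_add_le _ _
  have hcount : κ * (Finset.range t \ S).card < (S \ Finset.range t).card := by
    refine lt_of_mul_lt_mul_right ?_ (norm_nonneg (q t))
    nlinarith
  have hcard_t := Finset.card_inter_add_card_sdiff (Finset.range t) S
  have hcard_S := Finset.card_inter_add_card_sdiff S (Finset.range t)
  rw [Finset.card_range] at hcard_t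
  rw [Finset.inter_comm] at hcard_S
  rw [← hcard_t, ← hcard_S]
  push_cast
  nlinarith

end Cone

lemma card_mul_sum_le_mul_card_mul_sum {ι : Type*} {A B : Finset ι} {u : ι → ℝ} {K : ℝ}
    (h : ∀ a ∈ A, ∀ b ∈ B, u a ≤ K * u b) :
    B.card * ∑ a ∈ A, u a ≤ K * A.card * ∑ b ∈ B, u b :=
  calc B.card * ∑ a ∈ A, u a = ∑ a ∈ A, ∑ _b ∈ B, u a := by
        simp only [Finset.sum_const, nsmul_eq_mul, Finset.mul_sum]
    _ ≤ ∑ _a ∈ A, ∑ b ∈ B, K * u b :=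
        Finset.sum_le_sum fun a ha ↦ Finset.sum_le_sum fun b hb ↦ h a ha b hb
    _ = K * A.card * ∑ b ∈ B, u b := by
        rw [Finset.sum_const, nsmul_eq_mul, ← Finset.mul_sum]
        ring

theorem greedy_cover_cost_general (r n : ℕ) (ε : ℝ) (hε0 : 0 < ε) (hε1 : ε < 1/5)
    (ξ : EuclideanSpace ℝ (Fin r)) (hξ0 : ξ ≠ 0)
    (q : ℕ → EuclideanSpace ℝ (Fin r))
    (hord : ∀ k k', k ≤ k' → k' < n → ‖q k'‖ ≤ ‖q k‖)
    (hang : ∀ k < n, ⟪q k, ξ⟫ ≥ (1 - ε) * ‖q k‖ * ‖ξ‖)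
    (u : ℕ → ℝ)
    (hupos : ∀ k < n, 0 < u k)
    (hucomp : ∀ k < n, ∀ k' < n, u k ≤ (1 + ε) * u k')
    (C : ℝ)
    (S : Finset ℕ) (hSsub : S ⊆ Finset.range n)
    (hScov : C ≤ ‖∑ k ∈ S, q k‖)
    (hScard : 1/ε ≤ (S.card : ℝ))
    (hall : C ≤ ‖∑ k ∈ Finset.range n, q k‖)
    (m : ℕ)
    (hmin : ∀ m' < m, ‖∑ k ∈ Finset.range m', q k‖ < C) :
    ∑ k ∈ Finset.range m, u k ≤
      (1/(1 - 5*ε) + ε) * (1 + ε) * ∑ k ∈ S, u k := by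
  have h5ε : 0 < 1 - 5 * ε := by linarith
  have hκ : 1 - 5 * ε ≤ (2 * (1 - ε) ^ 2 - 1) * (1 - ε) := by
    nlinarith [mul_nonneg (sq_nonneg ε) (show 0 ≤ 3 - ε by linarith)]
  have hS0 : (0 : ℝ) < S.card := (one_div_pos.mpr hε0).trans_le hScard
  have hεS : 1 ≤ ε * S.card := by rwa [div_le_iff₀ hε0, mul_comm] at hScard
  have hmn : m ≤ n := by
    by_contra! h
    exact (hmin n h).not_ge hall
  have hm_card : (m : ℝ) ≤ (1 / (1 - 5 * ε) + ε) * S.card := by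
    rcases m with _ | t
    · rw [Nat.cast_zero]
      positivity
    have ht := mul_lt_card_of_norm_sum_range_lt (by omega) hξ0 (by linarith) (by linarith)
      (by nlinarith) hord hang hSsub ((hmin t (by omega)).trans_le hScov)
    have ht' : (t : ℝ) ≤ S.card / (1 - 5 * ε) := by
      rw [le_div_iff₀ h5ε]
      nlinarith [Nat.cast_nonneg (α := ℝ) t]
    rw [add_mul, one_div_mul_eq_div]
    push_cast
    linarith
  have hcost := card_mul_sum_le_mul_card_mul_sum (A := Finset.range m) (B := S) (u := u)
    fun a ha b hb ↦ hucomp a ((Finset.mem_range.mp ha).trans_le hmn) b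
      (Finset.mem_range.mp (hSsub hb))
  have hSu : 0 ≤ ∑ k ∈ S, u k :=
    Finset.sum_nonneg fun k hk ↦ (hupos k (Finset.mem_range.mp (hSsub hk))).le
  refine le_of_mul_le_mul_left ?_ hS0
  calc (S.card : ℝ) * ∑ k ∈ Finset.range m, u k ≤ (1 + ε) * m * ∑ k ∈ S, u k := by
        simpa using hcost
    _ ≤ (1 + ε) * ((1 / (1 - 5 * ε) + ε) * S.card) * ∑ k ∈ S, u k := by gcongr
    _ = S.card * ((1 / (1 - 5 * ε) + ε) * (1 + ε) * ∑ k ∈ S, u k) := by ring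

/-- Greedy cost bound: in the setting of the greedy covering lemma, if item costs
`u k > 0` all lie within a multiplicative factor `1+ε` of each other and the feasible
set `S*` has size at least `1/ε`, then the cost of the greedy solution (the first `m`
items, `m` least with `‖Σ_{k<m} q k‖ ≥ C`) is at most
`(1/(1-5ε) + ε)(1+ε)` times the cost of `S*`. -/
theorem greedy_cover_cost (r n : ℕ) (ε : ℝ) (hε0 : 0 < ε) (hε1 : ε < 1/5)
    (ξ : EuclideanSpace ℝ (Fin r)) (hξ0 : ξ ≠ 0) (hξ : ∀ i, 0 ≤ ξ i)
    (q : ℕ → EuclideanSpace ℝ (Fin r))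
    (hq0 : ∀ k < n, q k ≠ 0)
    (hqnn : ∀ k < n, ∀ i, 0 ≤ q k i)
    (hord : ∀ k k', k ≤ k' → k' < n → ‖q k'‖ ≤ ‖q k‖)
    (hang : ∀ k < n, ⟪q k, ξ⟫ ≥ (1 - ε) * ‖q k‖ * ‖ξ‖)
    (u : ℕ → ℝ)
    (hupos : ∀ k < n, 0 < u k)
    (hucomp : ∀ k < n, ∀ k' < n, u k ≤ (1 + ε) * u k')
    (C : ℝ) (hC : 0 < C)
    (S : Finset ℕ) (hSsub : S ⊆ Finset.range n)
    (hScov : C ≤ ‖∑ k ∈ S, q k‖)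
    (hScard : 1/ε ≤ (S.card : ℝ))
    (hall : C ≤ ‖∑ k ∈ Finset.range n, q k‖)
    (m : ℕ)
    (hm : C ≤ ‖∑ k ∈ Finset.range m, q k‖)
    (hmin : ∀ m' < m, ‖∑ k ∈ Finset.range m', q k‖ < C) :
    ∑ k ∈ Finset.range m, u k ≤
      (1/(1 - 5*ε) + ε) * (1 + ε) * ∑ k ∈ S, u k :=
  greedy_cover_cost_general r n ε hε0 hε1 ξ hξ0 q hord hang u hupos hucomp C S hSsub hScov hScard
    hall m hmin
end
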